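/- For b ≠ −1, the only polynomial invariants of the coadjoint representation of g_{4.8}^b are constants: if F is a polynomial in x_1,…,x_4 with c_{ij}^k x_k ∂F/∂x_j = 0 for all i, then F is constant. -/

import Mathlib

def c48 (b : ℝ) (i j k : Fin 4) : ℝ :=
  if i = 1 ∧ j = 2 ∧ k = 0 then 1 else
  if i = 2 ∧ j = 1 ∧ k = 0 then -1 else
  if i = 0 ∧ j = 3 ∧ k = 0 then 1 + b else
  if i = 3 ∧ j = 0 ∧ k = 0 then -(1 + b) else
  if i = 1 ∧ j = 3 ∧ k = 1 then 1 else
  if i = 3 ∧ j = 1 ∧ k = 1 then -1 else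
  if i = 2 ∧ j = 3 ∧ k = 2 then b else
  if i = 3 ∧ j = 2 ∧ k = 2 then -b else 0

/-- The bilinear bracket on `ℝ⁴` determined by the structure constants `c48 b`. -/
def br48 (b : ℝ) (x y : Fin 4 → ℝ) : Fin 4 → ℝ :=
  fun k => ∑ i, ∑ j, x i * y j * c48 b i j k

open MvPolynomial in
/-- The infinitesimal generator `X_i = c_{ij}^k x_k ∂_{x_j}` of the coadjoint action,
acting on polynomial functions on the dual space. -/
noncomputable def Xop48 (b : ℝ) (i : Fin 4) (P : MvPolynomial (Fin 4) ℝ) :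
    MvPolynomial (Fin 4) ℝ :=
  ∑ j, (∑ k, C (c48 b i j k) * X k) * pderiv j P

/-!
The generators act triangularly on the partial derivatives of `F`:
`X₁F = (1+b) x₁ ∂₄F`, `X₂F = x₁ ∂₃F + x₂ ∂₄F`, `X₃F = -x₁ ∂₂F + b x₃ ∂₄F` and
`X₄F = -(1+b) x₁ ∂₁F - x₂ ∂₂F - b x₃ ∂₃F`. As `1 + b ≠ 0` and the polynomial ring is a domain,
the four equations kill `∂₄F`, `∂₃F`, `∂₂F`, `∂₁F` in turn, and in characteristic zero a
polynomial with vanishing partial derivatives is constant. Indices are shifted by one in the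
code: `X 0` is `x₁` and `Xop48 b 0` is `X₁`.
-/

namespace MvPolynomial

theorem eq_C_of_pderiv_eq_zero {σ R : Type*} [CommRing R] [IsAddTorsionFree R]
    {p : MvPolynomial σ R} (h : ∀ i, pderiv i p = 0) : p = C (coeff 0 p) := by
  rw [← coe_inj]
  refine MvPowerSeries.pderiv.ext (fun i => ?_) ?_
  · rw [MvPowerSeries.pderiv_coe, MvPowerSeries.pderiv_coe, h, pderiv_C]
  · simp only [← MvPowerSeries.coeff_zero_eq_constantCoeff_apply, coeff_coe, coeff_zero_C]

end MvPolynomial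

open MvPolynomial

section Generators

variable (b : ℝ) (P : MvPolynomial (Fin 4) ℝ)

theorem Xop48_zero : Xop48 b 0 P = C (1 + b) * X 0 * pderiv 3 P := by
  simp [Xop48, c48, Fin.sum_univ_four]

theorem Xop48_one : Xop48 b 1 P = X 0 * pderiv 2 P + X 1 * pderiv 3 P := by
  simp [Xop48, c48, Fin.sum_univ_four]

theorem Xop48_two : Xop48 b 2 P = -(X 0 * pderiv 1 P) + C b * X 2 * pderiv 3 P := by
  simp [Xop48, c48, Fin.sum_univ_four]

theorem Xop48_three : Xop48 b 3 P =
    -(C (1 + b) * X 0 * pderiv 0 P) - X 1 * pderiv 1 P - C b * X 2 * pderiv 2 P := by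
  simp only [Xop48, c48, Fin.isValue, Fin.reduceEq, false_and, ↓reduceIte, true_and, neg_add_rev,
    Fin.sum_univ_four, and_true, zero_ne_one, and_false, one_ne_zero, C_0, zero_mul, add_zero,
    C_add, C_neg, C_1, neg_mul, one_mul, zero_add]
  ring

end Generators

open MvPolynomial in
/-- For `b ≠ -1`, the only polynomial invariants of the coadjoint representation of
`g_{4.8}^b` are the constants. -/
theorem g48_no_invariants (b : ℝ) (hb : b ≠ -1) :
    ∀ P : MvPolynomial (Fin 4) ℝ, (∀ i : Fin 4, Xop48 b i P = 0) → ∃ r : ℝ, P = C r := by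
  intro P h
  have hC : C (1 + b) ≠ (0 : MvPolynomial (Fin 4) ℝ) :=
    C_ne_zero.mpr fun h' => hb (by linarith)
  have h3 : pderiv 3 P = 0 := by
    have hX0 := h 0
    rw [Xop48_zero] at hX0
    exact (mul_eq_zero.mp hX0).resolve_left (mul_ne_zero hC (X_ne_zero 0))
  have h2 : pderiv 2 P = 0 := by
    have hX1 := h 1
    rw [Xop48_one, h3, mul_zero, add_zero] at hX1
    exact (mul_eq_zero.mp hX1).resolve_left (X_ne_zero 0)
  have h1 : pderiv 1 P = 0 := by
    have hX2 := h 2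
    rw [Xop48_two, h3, mul_zero, add_zero, neg_eq_zero] at hX2
    exact (mul_eq_zero.mp hX2).resolve_left (X_ne_zero 0)
  have h0 : pderiv 0 P = 0 := by
    have hX3 := h 3
    rw [Xop48_three, h1, h2, mul_zero, mul_zero, sub_zero, sub_zero, neg_eq_zero] at hX3
    exact (mul_eq_zero.mp hX3).resolve_left (mul_ne_zero hC (X_ne_zero 0))
  exact ⟨_, eq_C_of_pderiv_eq_zero (by simp [Fin.forall_fin_succ, h0, h1, h2, h3])⟩
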